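/- Let G be a finite simple graph on vertices V = {x_1, ..., x_n} with cover ideal J = J(G) ⊆ S = K[x_1, ..., x_n], and let m = x_1 x_2 ⋯ x_n. Then G contains an odd circuit (a closed walk of odd length, equivalently an odd cycle) if and only if m ∉ J^2. -/

import Mathlib

open MvPolynomial

/-- A finite simple graph on vertex set `Fin n`, presented as a hypergraph all of whose
edges have cardinality exactly two. -/
structure GraphOn (n : ℕ) where
  edges : Finset (Finset (Fin n))
  card_eq : ∀ e ∈ edges, e.card = 2

/-- `w` is a vertex cover of `G`: it meets every edge. -/
def IsCover {n : ℕ} (G : GraphOn n) (w : Finset (Fin n)) : Prop :=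
  ∀ e ∈ G.edges, (w ∩ e).Nonempty

/-- The cover ideal of `G`, generated by the squarefree monomials corresponding to
vertex covers. -/
noncomputable def coverIdeal {n : ℕ} (K : Type*) [Field K] (G : GraphOn n) :
    Ideal (MvPolynomial (Fin n) K) :=
  Ideal.span {m | ∃ w : Finset (Fin n), IsCover G w ∧ m = ∏ i ∈ w, X i}

/-- `G` contains an odd circuit: a closed walk of odd length. -/
def HasOddCircuit {n : ℕ} (G : GraphOn n) : Prop :=
  ∃ (ℓ : ℕ) (w : ℕ → Fin n), Odd ℓ ∧ w ℓ = w 0 ∧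
    ∀ i < ℓ, ({w i, w (i + 1)} : Finset (Fin n)) ∈ G.edges

/-! The square `J(G)²` is the monomial ideal generated by the products `x_{w₁} x_{w₂}` of two
vertex covers, and such a product divides the squarefree monomial `x_1 ⋯ x_n` exactly when
`w₁` and `w₂` are disjoint. A pair of disjoint vertex covers is the same as a proper
2-colouring, and a graph is 2-colourable if and only if it has no closed walk of odd length. -/

open scoped Pointwise

theorem SimpleGraph.exists_walk_of_forall_adj {V : Type*} {G : SimpleGraph V} (f : ℕ → V)
    {ℓ : ℕ} (h : ∀ i < ℓ, G.Adj (f i) (f (i + 1))) :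
    ∃ p : G.Walk (f 0) (f ℓ), p.length = ℓ := by
  induction ℓ with
  | zero => exact ⟨.nil, rfl⟩
  | succ ℓ ih =>
    obtain ⟨p, hp⟩ := ih fun i hi => h i (by omega)
    exact ⟨p.concat (h ℓ (by omega)), by simp [hp]⟩

namespace MvPolynomial

variable {σ R : Type*} [CommSemiring R]

theorem span_monomial_image_mul_span_monomial_image (s t : Set (σ →₀ ℕ)) :
    Ideal.span ((monomial · (1 : R)) '' s) * Ideal.span ((monomial · (1 : R)) '' t) =
      Ideal.span ((monomial · (1 : R)) '' (s + t)) := by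
  rw [Ideal.span_mul_span']
  congr 1
  ext p
  simp only [Set.mem_mul, Set.mem_image, Set.mem_add]
  constructor
  · rintro ⟨_, ⟨a, ha, rfl⟩, _, ⟨b, hb, rfl⟩, rfl⟩
    exact ⟨a + b, ⟨a, ha, b, hb, rfl⟩, by rw [monomial_mul, one_mul]⟩
  · rintro ⟨_, ⟨a, ha, b, hb, rfl⟩, rfl⟩
    exact ⟨_, ⟨a, ha, rfl⟩, _, ⟨b, hb, rfl⟩, by rw [monomial_mul, one_mul]⟩

theorem monomial_mem_span_monomial_image_iff [Nontrivial R] {d : σ →₀ ℕ}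
    {s : Set (σ →₀ ℕ)} :
    monomial d (1 : R) ∈ Ideal.span ((monomial · (1 : R)) '' s) ↔ ∃ e ∈ s, e ≤ d := by
  classical
  simp [mem_ideal_span_monomial_image, support_monomial]

theorem prod_X_eq_monomial (s : Finset σ) :
    ∏ i ∈ s, (X i : MvPolynomial σ R) = monomial (∑ i ∈ s, Finsupp.single i 1) 1 :=
  (monomial_sum_one s _).symm

end MvPolynomial

theorem Finset.sum_single_one_apply {σ : Type*} [DecidableEq σ] (s : Finset σ) (j : σ) :
    (∑ i ∈ s, Finsupp.single i 1 : σ →₀ ℕ) j = if j ∈ s then 1 else 0 := by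
  simp [Finsupp.finsetSum_apply, Finsupp.single_apply]

theorem Finset.sum_single_one_add_le_univ_iff {σ : Type*} [Fintype σ] (s t : Finset σ) :
    (∑ i ∈ s, Finsupp.single i 1 + ∑ i ∈ t, Finsupp.single i 1 : σ →₀ ℕ) ≤
        ∑ i, Finsupp.single i 1 ↔ Disjoint s t := by
  classical
  simp only [Finsupp.le_def, Finsupp.add_apply, Finset.sum_single_one_apply, Finset.mem_univ,
    if_true, Finset.disjoint_left]
  refine forall_congr' fun j => ?_
  split_ifs <;> simp_all

namespace GraphOn

variable {n : ℕ} (G : GraphOn n)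

def toSimpleGraph : SimpleGraph (Fin n) where
  Adj a b := {a, b} ∈ G.edges
  symm := ⟨fun a b h => Finset.pair_comm a b ▸ h⟩
  loopless := ⟨fun a h => by simpa using G.card_eq _ h⟩

theorem hasOddCircuit_iff_exists_odd_loop :
    HasOddCircuit G ↔ ∃ (u : Fin n) (p : G.toSimpleGraph.Walk u u), Odd p.length := by
  constructor
  · rintro ⟨ℓ, w, hodd, hclosed, hadj⟩
    obtain ⟨p, hp⟩ := SimpleGraph.exists_walk_of_forall_adj (G := G.toSimpleGraph) w hadj
    exact ⟨w 0, p.copy rfl hclosed, by rwa [SimpleGraph.Walk.length_copy, hp]⟩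
  · rintro ⟨u, p, hodd⟩
    exact ⟨p.length, p.getVert, hodd, by rw [p.getVert_length, p.getVert_zero],
      fun i hi => p.adj_getVert_succ hi⟩

theorem hasOddCircuit_iff_not_colorable_two :
    HasOddCircuit G ↔ ¬ G.toSimpleGraph.Colorable 2 := by
  simp [SimpleGraph.two_colorable_iff_forall_loop_even, hasOddCircuit_iff_exists_odd_loop]

theorem isCover_iff_forall_adj {w : Finset (Fin n)} :
    IsCover G w ↔ ∀ a b, G.toSimpleGraph.Adj a b → a ∈ w ∨ b ∈ w := by
  constructor
  · intro hw a b hab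
    obtain ⟨v, hv⟩ := hw _ hab
    simp only [Finset.mem_inter, Finset.mem_insert, Finset.mem_singleton] at hv
    obtain ⟨hvw, rfl | rfl⟩ := hv
    exacts [.inl hvw, .inr hvw]
  · intro hw e he
    obtain ⟨a, b, -, rfl⟩ := Finset.card_eq_two.mp (G.card_eq e he)
    rcases hw a b he with ha | hb
    exacts [⟨a, by simp [ha]⟩, ⟨b, by simp [hb]⟩]

theorem colorable_two_iff_exists_disjoint_isCover :
    G.toSimpleGraph.Colorable 2 ↔
      ∃ w₁ w₂ : Finset (Fin n), IsCover G w₁ ∧ IsCover G w₂ ∧ Disjoint w₁ w₂ := by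
  simp only [isCover_iff_forall_adj]
  constructor
  · rintro ⟨c⟩
    have hc : ∀ a b, G.toSimpleGraph.Adj a b →
        (c a = 0 ∨ c b = 0) ∧ (c a = 1 ∨ c b = 1) :=
      fun a b hab => by have := c.valid hab; omega
    refine ⟨({v | c v = 0} : Finset _), ({v | c v = 1} : Finset _),
      fun a b hab => by simpa using (hc a b hab).1,
      fun a b hab => by simpa using (hc a b hab).2, ?_⟩
    exact Finset.disjoint_filter.2 fun v _ h => by simp [h]
  · rintro ⟨w₁, w₂, h₁, h₂, hdisj⟩
    refine ⟨.mk (fun v => if v ∈ w₁ then 0 else 1) fun {a b} hab => ?_⟩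
    have h₁ab := h₁ a b hab
    have h₂ab := h₂ a b hab
    have := Finset.disjoint_left.1 hdisj
    split_ifs <;> grind

end GraphOn

section CoverIdeal

variable {n : ℕ} (K : Type*) [Field K] (G : GraphOn n)

theorem coverIdeal_eq_span_monomial_image :
    coverIdeal K G = Ideal.span ((monomial · (1 : K)) ''
      ((fun w : Finset (Fin n) => ∑ i ∈ w, Finsupp.single i 1) '' {w | IsCover G w})) := by
  rw [coverIdeal, Set.image_image]
  congr 1
  ext p
  simp [prod_X_eq_monomial, eq_comm]

theorem prod_X_mem_coverIdeal_sq_iff :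
    (∏ j : Fin n, (X j : MvPolynomial (Fin n) K)) ∈ coverIdeal K G ^ 2 ↔
      ∃ w₁ w₂ : Finset (Fin n), IsCover G w₁ ∧ IsCover G w₂ ∧ Disjoint w₁ w₂ := by
  rw [coverIdeal_eq_span_monomial_image, sq, span_monomial_image_mul_span_monomial_image,
    prod_X_eq_monomial, monomial_mem_span_monomial_image_iff]
  simp only [Set.mem_add, Set.mem_image, Set.mem_ofPred_eq]
  constructor
  · rintro ⟨_, ⟨_, ⟨w₁, h₁, rfl⟩, _, ⟨w₂, h₂, rfl⟩, rfl⟩, hle⟩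
    exact ⟨w₁, w₂, h₁, h₂, (Finset.sum_single_one_add_le_univ_iff w₁ w₂).1 hle⟩
  · rintro ⟨w₁, w₂, h₁, h₂, hdisj⟩
    exact ⟨_, ⟨_, ⟨w₁, h₁, rfl⟩, _, ⟨w₂, h₂, rfl⟩, rfl⟩,
      (Finset.sum_single_one_add_le_univ_iff w₁ w₂).2 hdisj⟩

end CoverIdeal

/-- A finite simple graph `G` contains an odd circuit if and only if
`m = x_1 ⋯ x_n` does not lie in `J(G)^2`. -/
theorem hasOddCircuit_iff_not_mem_coverIdeal_sq {n : ℕ} (K : Type*) [Field K] (G : GraphOn n) :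
    HasOddCircuit G ↔
      (∏ j : Fin n, (X j : MvPolynomial (Fin n) K)) ∉ coverIdeal K G ^ 2 := by
  rw [prod_X_mem_coverIdeal_sq_iff, ← G.colorable_two_iff_exists_disjoint_isCover,
    G.hasOddCircuit_iff_not_colorable_two]
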